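/- For all integers n ≥ 1 and k with 0 ≤ k ≤ n, the following identity holds in K = ℚ(q): ∑_{i=0}^{k−1} (−1)^i · q^{(k−i−1)²} / [2k−2i−2]_q! · ( c_{n,i+1} + d_{n,i}/[2k−2i−1]_q ) = 0. -/

import Mathlib

noncomputable section

/-- The field `K = ℚ(q)` of rational functions over `ℚ`. -/
abbrev K : Type := RatFunc ℚ

/-- The indeterminate `q`. -/
def q : K := RatFunc.X

/-- The `q`-integer `[m]_q = (1 - q^m)/(1 - q)`, for any integer `m`. -/
def qint (m : ℤ) : K := (1 - q ^ m) / (1 - q)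

/-- The `q`-factorial `[n]_q! = [1]_q [2]_q ⋯ [n]_q`. -/
def qfact : ℕ → K
  | 0 => 1
  | n + 1 => qfact n * qint (n + 1)

/-- `b 0 = 0` and `b n = [2n-1]_q q^{(-1)^(n-1) n(n-1)/2 - n + 1}` for `n ≥ 1`. -/
def b (n : ℕ) : K :=
  if n = 0 then 0
  else qint (2 * n - 1) *
    q ^ ((-1 : ℤ) ^ (n - 1) * ((n : ℤ) * ((n : ℤ) - 1) / 2) - (n : ℤ) + 1)

/-- `A m` is the polynomial `A_{m-1}` of the paper (index shifted by one, so
`A 0 = A_{-1} = 1`, `A 1 = A_0 = 0`). -/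
def A : ℕ → Polynomial K
  | 0 => 1
  | 1 => 0
  | (n + 2) => Polynomial.C (b (n + 1)) * A (n + 1) - Polynomial.X ^ 2 * A n

/-- `B m` is the polynomial `B_{m-1}` of the paper (index shifted by one, so
`B 0 = B_{-1} = 0`, `B 1 = B_0 = 1`). -/
def B : ℕ → Polynomial K
  | 0 => 0
  | 1 => 1
  | (n + 2) => Polynomial.C (b (n + 1)) * B (n + 1) - Polynomial.X ^ 2 * B n

/-- `c n j` is the coefficient of `z^(2j)` in `A_n` (and `0` for `j < 0`). -/
def c (n : ℤ) (j : ℤ) : K :=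
  if j < 0 then 0 else (A (n + 1).toNat).coeff (2 * j).toNat

/-- `d n j` is the coefficient of `z^(2j)` in `B_n` (and `0` for `j < 0`). -/
def d (n : ℤ) (j : ℤ) : K :=
  if j < 0 then 0 else (B (n + 1).toNat).coeff (2 * j).toNat

/-- `sin_q(z) = ∑ (-1)^n q^(n^2) z^(2n+1)/[2n+1]_q!` as a formal power series. -/
def sinq : PowerSeries K :=
  PowerSeries.mk fun m =>
    if m % 2 = 1 then (-1 : K) ^ (m / 2) * q ^ ((m / 2) ^ 2) / qfact m else 0

/-- `cos_q(z) = ∑ (-1)^n q^(n^2) z^(2n)/[2n]_q!` as a formal power series. -/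
def cosq : PowerSeries K :=
  PowerSeries.mk fun m =>
    if m % 2 = 0 then (-1 : K) ^ (m / 2) * q ^ ((m / 2) ^ 2) / qfact m else 0

/-- The `q`-Pochhammer symbol `(a; p)_m = (1-a)(1-ap)⋯(1-ap^(m-1))`. -/
def qpoch (a p : K) : ℕ → K
  | 0 => 1
  | m + 1 => qpoch a p m * (1 - a * p ^ m)


-- ===== auxiliary development =====

lemma hq0 : q ≠ 0 := RatFunc.X_ne_zero

open Polynomial in
lemma q_pow_ne_one {m : ℕ} (hm : 1 ≤ m) : q ^ m ≠ 1 := by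
  intro h
  have h2 : (algebraMap (Polynomial ℚ) (RatFunc ℚ)) (X ^ m) = algebraMap _ _ 1 := by
    simpa [map_pow, RatFunc.algebraMap_X, q] using h
  have h3 := RatFunc.algebraMap_injective (K := ℚ) h2
  have := Polynomial.natDegree_X_pow (R := ℚ) m
  rw [h3] at this
  simp at this
  omega

lemma one_sub_q_ne : (1 : K) - q ≠ 0 := by
  intro h
  have : q = 1 := by linear_combination -h
  exact q_pow_ne_one le_rfl (by simpa using this)

/-- the q-integer with natural argument. -/
def qi (n : ℕ) : K := (1 - q ^ n) / (1 - q)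

lemma qint_natCast (n : ℕ) : qint (n : ℤ) = qi n := by
  rw [qint, qi, zpow_natCast]

lemma qi_ne {n : ℕ} (hn : 1 ≤ n) : qi n ≠ 0 := by
  apply div_ne_zero _ one_sub_q_ne
  intro h
  have : q ^ n = 1 := by linear_combination -h
  exact q_pow_ne_one hn this

lemma qi_one : qi 1 = 1 := by
  rw [qi, pow_one, div_self one_sub_q_ne]

lemma qi_add (x y : ℕ) : qi (x + y) = qi x + q ^ x * qi y := by
  rw [qi, qi, qi]
  field_simp
  ring

lemma qfact_succ (n : ℕ) : qfact (n + 1) = qfact n * qi (n + 1) := by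
  rw [qfact, ← qint_natCast]
  norm_cast

lemma qfact_ne (n : ℕ) : qfact n ≠ 0 := by
  induction n with
  | zero => simp [qfact]
  | succ n ih =>
      rw [qfact_succ]
      exact mul_ne_zero ih (qi_ne (by omega))
/-- product `∏_{i<n} [2(m+i)+3]`. -/
def PP (n m : ℕ) : K := ∏ i ∈ Finset.range n, qi (2*(m+i)+3)

lemma PP_zero (m : ℕ) : PP 0 m = 1 := by simp [PP]

lemma PP_succ_left (n m : ℕ) : PP (n+1) m = qi (2*m+3) * PP n (m+1) := by
  rw [PP, Finset.prod_range_succ', mul_comm, PP]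
  have h0 : 2*(m+0)+3 = 2*m+3 := by omega
  rw [h0]
  congr 1
  apply Finset.prod_congr rfl
  intro i _
  congr 1
  omega

lemma PP_succ_right (n m : ℕ) : PP (n+1) m = PP n m * qi (2*(m+n)+3) := Finset.prod_range_succ _ _

lemma PP_ne (n m : ℕ) : PP n m ≠ 0 := by
  apply Finset.prod_ne_zero_iff.mpr
  intro i _
  exact qi_ne (by omega)

/-- exponent in the closed formula. -/
def ee (n m : ℕ) : ℕ := if n % 2 = 0 then (n/2 + m)^2 else (n/2 + m + 1)^2 + (n/2 + 1)*n

lemma ee_even (s m : ℕ) : ee (2*s) m = (s + m)^2 := by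
  have h1 : (2*s) % 2 = 0 := by omega
  have h2 : (2*s)/2 = s := by omega
  rw [ee, h1, h2]; simp

lemma ee_odd (s m : ℕ) : ee (2*s+1) m = (s + m + 1)^2 + (s+1)*(2*s+1) := by
  have h1 : (2*s+1) % 2 = 1 := by omega
  have h2 : (2*s+1)/2 = s := by omega
  rw [ee, h1, h2]; simp

/-- closed formula for the coefficients of the remainder series. -/
def tC (n m : ℕ) : K := (-1)^m * q^(ee n m) / (qfact (2*m+1) * PP n m)

/-- value of the original sum. -/
def TT (a k : ℕ) : K := if a = 0 ∨ k < a then 0 else (-1)^(k-1) * tC (a-1) (k-a)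

lemma b_one : b 1 = 1 := by
  rw [b, if_neg one_ne_zero]
  norm_num
  rw [← Nat.cast_one (R:=ℤ), qint_natCast, qi_one]

lemma b_even (s : ℕ) : b (2*s+2) = qi (4*s+3) / q^((2*s+1)*(s+2)) := by
  rw [b, if_neg (by omega)]
  have h1 : (2*(2*s+2:ℕ) - 1 : ℤ) = ((4*s+3 : ℕ) : ℤ) := by push_cast; ring
  rw [h1, qint_natCast, div_eq_mul_inv]
  congr 1
  have hodd : ((-1:ℤ) ^ (2*s+2-1)) = -1 := by
    rw [show 2*s+2-1 = 2*s+1 by omega]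
    exact Odd.neg_one_pow ⟨s, by ring⟩
  have hdiv : ((2*s+2:ℕ):ℤ) * (((2*s+2:ℕ):ℤ) - 1) / 2 = (2*(s:ℤ)+1)*((s:ℤ)+1) := by
    rw [show ((2*s+2:ℕ):ℤ) * (((2*s+2:ℕ):ℤ) - 1) = 2*((2*(s:ℤ)+1)*((s:ℤ)+1)) by push_cast; ring]
    exact Int.mul_ediv_cancel_left _ two_ne_zero
  rw [hodd, hdiv]
  rw [show (-1 * ((2*(s:ℤ)+1)*((s:ℤ)+1)) - ((2*s+2:ℕ):ℤ) + 1) = -(((2*s+1)*(s+2) : ℕ) : ℤ) by push_cast; ring]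
  rw [zpow_neg, zpow_natCast]

lemma b_odd (s : ℕ) : b (2*s+3) = qi (4*s+5) * q^((s+1)*(2*s+1)) := by
  rw [b, if_neg (by omega)]
  have h1 : (2*(2*s+3:ℕ) - 1 : ℤ) = ((4*s+5 : ℕ) : ℤ) := by push_cast; ring
  rw [h1, qint_natCast]
  congr 1
  have heven : ((-1:ℤ) ^ (2*s+3-1)) = 1 := by
    rw [show 2*s+3-1 = 2*(s+1) by omega]
    exact Even.neg_one_pow ⟨s+1, by ring⟩
  have hdiv : ((2*s+3:ℕ):ℤ) * (((2*s+3:ℕ):ℤ) - 1) / 2 = (2*(s:ℤ)+3)*((s:ℤ)+1) := by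
    rw [show ((2*s+3:ℕ):ℤ) * (((2*s+3:ℕ):ℤ) - 1) = 2*((2*(s:ℤ)+3)*((s:ℤ)+1)) by push_cast; ring]
    exact Int.mul_ediv_cancel_left _ two_ne_zero
  rw [heven, hdiv]
  rw [show (1 * ((2*(s:ℤ)+3)*((s:ℤ)+1)) - ((2*s+3:ℕ):ℤ) + 1) = (((s+1)*(2*s+1) : ℕ) : ℤ) by push_cast; ring]
  exact zpow_natCast _ _
lemma qfact_odd_succ (m : ℕ) : qfact (2*(m+1)+1) = qfact (2*m+1) * qi (2*m+2) * qi (2*m+3) := by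
  rw [show 2*(m+1)+1 = (2*m+2)+1 by ring, qfact_succ, show 2*m+2 = (2*m+1)+1 by ring, qfact_succ]

lemma lemA (a : ℕ) : b (a+2) * tC (a+1) 0 = tC a 0 := by
  rcases Nat.even_or_odd a with ⟨s, hs⟩ | ⟨s, hs⟩
  · subst hs
    have hs2 : s + s = 2*s := by ring
    rw [hs2]
    have e1 : ee (2*s+1) 0 = (s+1)^2 + (s+1)*(2*s+1) := by rw [ee_odd]
    have e2 : ee (2*s) 0 = s^2 := by rw [ee_even]; norm_num
    have p1 : PP (2*s+1) 0 = PP (2*s) 0 * qi (4*s+3) := by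
      rw [PP_succ_right, show 2*(0+2*s)+3 = 4*s+3 by omega]
    rw [b_even, tC, tC, e1, e2, p1]
    have h1 : qi (4*s+3) ≠ 0 := qi_ne (by omega)
    have h2 : PP (2*s) 0 ≠ 0 := PP_ne _ _
    have h3 : qfact (2*0+1) ≠ 0 := qfact_ne _
    have h4 : q^((2*s+1)*(s+2)) ≠ 0 := pow_ne_zero _ hq0
    field_simp
    ring
  · subst hs
    have e1 : ee (2*s+2) 0 = (s+1)^2 := by
      rw [show 2*s+2 = 2*(s+1) by ring, ee_even]
    have e2 : ee (2*s+1) 0 = (s+1)^2 + (s+1)*(2*s+1) := by rw [ee_odd]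
    have p1 : PP (2*s+2) 0 = PP (2*s+1) 0 * qi (4*s+5) := by
      rw [PP_succ_right, show 2*(0+(2*s+1))+3 = 4*s+5 by omega]
    rw [show 2*s+1+2 = 2*s+3 by ring, b_odd, tC, tC, e1, e2, p1]
    have h1 : qi (4*s+5) ≠ 0 := qi_ne (by omega)
    have h2 : PP (2*s+1) 0 ≠ 0 := PP_ne _ _
    have h3 : qfact (2*0+1) ≠ 0 := qfact_ne _
    field_simp
    ring

lemma lemB (a m : ℕ) : tC (a+2) m = b (a+2) * tC (a+1) (m+1) - tC a (m+1) := by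
  have f1 := qfact_odd_succ m
  have h3 : qfact (2*m+1) ≠ 0 := qfact_ne _
  have h4 : qi (2*m+2) ≠ 0 := qi_ne (by omega)
  have h5 : qi (2*m+3) ≠ 0 := qi_ne (by omega)
  rcases Nat.even_or_odd a with ⟨s, hs⟩ | ⟨s, hs⟩
  · subst hs
    have hs2 : s + s = 2*s := by ring
    rw [hs2]
    have e1 : ee (2*s+2) m = (s+m+1)^2 := by
      rw [show 2*s+2 = 2*(s+1) by ring, ee_even]; ring_nf
    have e2 : ee (2*s+1) (m+1) = (s+m+2)^2 + (s+1)*(2*s+1) := by rw [ee_odd]; ring_nf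
    have e3 : ee (2*s) (m+1) = (s+m+1)^2 := by rw [ee_even]; ring_nf
    have p2 : PP (2*s+1) (m+1) = PP (2*s) (m+1) * qi ((2*m+2)+(4*s+3)) := by
      rw [PP_succ_right, show 2*((m+1)+2*s)+3 = (2*m+2)+(4*s+3) by omega]
    have p1 : PP (2*s+2) m = qi (2*m+3) * (PP (2*s) (m+1) * qi ((2*m+2)+(4*s+3))) := by
      rw [show 2*s+2 = (2*s+1)+1 by ring, PP_succ_left, p2]
    rw [b_even, tC, tC, tC, e1, e2, e3, p1, p2, f1]
    have h1 : qi (4*s+3) ≠ 0 := qi_ne (by omega)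
    have h2 : PP (2*s) (m+1) ≠ 0 := PP_ne _ _
    have h6 : q^((2*s+1)*(s+2)) ≠ 0 := pow_ne_zero _ hq0
    have h7 : qi ((2*m+2)+(4*s+3)) ≠ 0 := qi_ne (by omega)
    rw [pow_succ (-1 : K) m, div_mul_div_comm,
      div_sub_div _ _ (by apply_rules [mul_ne_zero, pow_ne_zero, qfact_ne, PP_ne, qi_ne, hq0] <;> omega)
        (by apply_rules [mul_ne_zero, pow_ne_zero, qfact_ne, PP_ne, qi_ne, hq0] <;> omega),
      div_eq_div_iff (by apply_rules [mul_ne_zero, pow_ne_zero, qfact_ne, PP_ne, qi_ne, hq0] <;> omega)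
        (by apply_rules [mul_ne_zero, pow_ne_zero, qfact_ne, PP_ne, qi_ne, hq0] <;> omega),
      qi_add (2*m+2) (4*s+3)]
    ring
  · subst hs
    have e1 : ee (2*s+3) m = (s+m+2)^2 + (s+2)*(2*s+3) := by
      rw [show 2*s+1+2 = 2*(s+1)+1 by ring, ee_odd]; ring_nf
    have e2 : ee (2*s+2) (m+1) = (s+m+2)^2 := by
      rw [show 2*s+2 = 2*(s+1) by ring, ee_even]; ring_nf
    have e3 : ee (2*s+1) (m+1) = (s+m+2)^2 + (s+1)*(2*s+1) := by rw [ee_odd]; ring_nf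
    have p2 : PP (2*s+2) (m+1) = PP (2*s+1) (m+1) * qi ((4*s+5)+(2*m+2)) := by
      rw [PP_succ_right, show 2*((m+1)+(2*s+1))+3 = (4*s+5)+(2*m+2) by omega]
    have p1 : PP (2*s+3) m = qi (2*m+3) * (PP (2*s+1) (m+1) * qi ((4*s+5)+(2*m+2))) := by
      rw [show 2*s+3 = (2*s+2)+1 by ring, PP_succ_left, p2]
    rw [show 2*s+1+2 = 2*s+3 by ring, b_odd, tC, tC, tC, e1, e2, e3, p1, p2, f1]
    have h1 : qi (4*s+5) ≠ 0 := qi_ne (by omega)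
    have h2 : PP (2*s+1) (m+1) ≠ 0 := PP_ne _ _
    have h7 : qi ((4*s+5)+(2*m+2)) ≠ 0 := qi_ne (by omega)
    rw [pow_succ (-1 : K) m, ← mul_div_assoc,
      div_sub_div _ _ (by apply_rules [mul_ne_zero, pow_ne_zero, qfact_ne, PP_ne, qi_ne, hq0] <;> omega)
        (by apply_rules [mul_ne_zero, pow_ne_zero, qfact_ne, PP_ne, qi_ne, hq0] <;> omega),
      div_eq_div_iff (by apply_rules [mul_ne_zero, pow_ne_zero, qfact_ne, PP_ne, qi_ne, hq0] <;> omega)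
        (by apply_rules [mul_ne_zero, pow_ne_zero, qfact_ne, PP_ne, qi_ne, hq0] <;> omega),
      qi_add (4*s+5) (2*m+2)]
    ring

lemma lemC (m : ℕ) : tC 1 m = tC 0 (m+1) + (-1)^m * q^((m+1)^2) / qfact (2*m+2) := by
  have e1 : ee 1 m = (m+1)^2 + 1 := by
    rw [show (1:ℕ) = 2*0+1 by ring, ee_odd]; ring_nf
  have e2 : ee 0 (m+1) = (m+1)^2 := by
    rw [show (0:ℕ) = 2*0 by ring, ee_even]; ring_nf
  have p1 : PP 1 m = qi (2*m+3) := by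
    rw [show (1:ℕ) = 0+1 by ring, PP_succ_left, PP_zero, mul_one]
  have f1 := qfact_odd_succ m
  have f2 : qfact (2*m+2) = qfact (2*m+1) * qi (2*m+2) := by
    rw [show 2*m+2 = (2*m+1)+1 by ring, qfact_succ]
  have h3 : qfact (2*m+1) ≠ 0 := qfact_ne _
  have h4 : qi (2*m+2) ≠ 0 := qi_ne (by omega)
  have h5 : qi (2*m+3) ≠ 0 := qi_ne (by omega)
  have key : qi (2*m+3) = 1 + q * qi (2*m+2) := by
    rw [show 2*m+3 = 1+(2*m+2) by ring, qi_add, qi_one, pow_one]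
  rw [tC, tC, e1, e2, p1, PP_zero, mul_one, f1, f2, key]
  rw [pow_succ (-1 : K) m]
  have h6 : (1:K) + q * qi (2*m+2) ≠ 0 := by rw [← key]; exact qi_ne (by omega)
  field_simp
  ring
lemma TT_eq_zero {a k : ℕ} (h : a = 0 ∨ k < a) : TT a k = 0 := by rw [TT, if_pos h]

lemma TT_eq {a k : ℕ} (ha : 1 ≤ a) (hk : a ≤ k) : TT a k = (-1)^(k-1) * tC (a-1) (k-a) := by
  rw [TT, if_neg (by omega)]

lemma TTrec (a k : ℕ) : TT (a+3) (k+1) = b (a+2) * TT (a+2) (k+1) + TT (a+1) k := by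
  rcases lt_trichotomy k (a+1) with h | h | h
  · rw [TT_eq_zero (Or.inr (by omega)), TT_eq_zero (Or.inr (by omega)),
      TT_eq_zero (Or.inr (by omega))]
    ring
  · subst h
    rw [TT_eq_zero (Or.inr (by omega)), TT_eq (by omega) (by omega), TT_eq (by omega) (by omega)]
    rw [show a+2-1 = a+1 by omega, show a+1+1-(a+2) = 0 by omega,
      show a+1-1 = a by omega, show a+1-(a+1) = 0 by omega]
    linear_combination ((-1:K)^a) * lemA a
  · obtain ⟨m, rfl⟩ : ∃ m, k = a+2+m := ⟨k - (a+2), by omega⟩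
    rw [TT_eq (by omega) (by omega), TT_eq (by omega) (by omega), TT_eq (by omega) (by omega)]
    rw [show a+3-1 = a+2 by omega, show a+2+m+1-1 = a+2+m by omega,
      show a+2+m+1-(a+3) = m by omega, show a+2-1 = a+1 by omega,
      show a+2+m+1-(a+2) = m+1 by omega, show a+1-1 = a by omega,
      show a+2+m-1 = a+1+m by omega, show a+2+m-(a+1) = m+1 by omega]
    linear_combination ((-1:K)^(a+2+m)) * lemB a m

lemma qfact_zero : qfact 0 = 1 := rfl

lemma TTrec0 (k : ℕ) : TT 2 (k+1) = b 1 * TT 1 (k+1) + TT 0 k - q^(k^2)/qfact (2*k) := by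
  rw [b_one, TT_eq_zero (a := 0) (Or.inl rfl)]
  cases k with
  | zero =>
      rw [TT_eq_zero (Or.inr (by omega)), TT_eq (by omega) (by omega)]
      norm_num
      rw [tC, PP_zero, show ee 0 0 = 0 by simp [ee], show qfact 1 = 1 by
        rw [show (1:ℕ) = 0+1 from rfl, qfact_succ, qfact_zero, qi_one]; ring]
      norm_num [qfact_zero]
  | succ m =>
      rw [TT_eq (by omega) (by omega), TT_eq (by omega) (by omega)]
      rw [show m+1+1-1 = m+1 by omega, show m+1+1-2 = m by omega, show 2-1 = 1 by omega,
        show 1-1 = 0 by omega, show 2*(m+1) = 2*m+2 by ring]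
      have hp : ((-1:K)) ^ (m*2) = 1 := by rw [mul_comm, pow_mul, neg_one_sq, one_pow]
      linear_combination ((-1:K)^(m+1)) * lemC m
        - (q * q^(m*2) * q^(m^2) * (qfact (2*m+2))⁻¹) * hp

/-- the sum from the theorem, with `a = n+1`. -/
def SS (a k : ℕ) : K :=
  ∑ i ∈ Finset.range k,
    (-1 : K) ^ i * q ^ ((k - i - 1) ^ 2) / qfact (2 * k - 2 * i - 2) *
      ((A a).coeff (2*i+2) + (B a).coeff (2*i) / qint (2 * (k : ℤ) - 2 * (i : ℤ) - 1))

lemma SS_k_zero (a : ℕ) : SS a 0 = 0 := by simp [SS]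

lemma SS_a_zero (k : ℕ) : SS 0 k = 0 := by
  rw [SS]
  apply Finset.sum_eq_zero
  intro i _
  have h1 : (A 0).coeff (2*i+2) = 0 := by
    rw [show A 0 = 1 from rfl, Polynomial.coeff_one, if_neg (by omega)]
  have h2 : (B 0).coeff (2*i) = 0 := by
    rw [show B 0 = 0 from rfl, Polynomial.coeff_zero]
  rw [h1, h2]
  simp

lemma SS_one (k : ℕ) : SS 1 (k+1) = q^(k^2)/qfact (2*k+1) := by
  rw [SS, Finset.sum_eq_single_of_mem 0 (Finset.mem_range.mpr (by omega))]
  · have h1 : (A 1).coeff (2*0+2) = 0 := by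
      rw [show A 1 = 0 from rfl, Polynomial.coeff_zero]
    have h2 : (B 1).coeff (2*0) = 1 := by
      rw [show B 1 = 1 from rfl, Polynomial.coeff_one, if_pos (by omega)]
    have h3 : (2 * ((k+1:ℕ) : ℤ) - 2 * ((0:ℕ):ℤ) - 1) = ((2*k+1 : ℕ) : ℤ) := by push_cast; ring
    rw [h1, h2, h3, qint_natCast]
    rw [show k+1-0-1 = k by omega, show 2*(k+1)-2*0-2 = 2*k by omega]
    rw [zero_add, div_mul_div_comm, mul_one, ← qfact_succ]
    norm_num
  · intro i _ hi
    have h1 : (A 1).coeff (2*i+2) = 0 := by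
      rw [show A 1 = 0 from rfl, Polynomial.coeff_zero]
    have h2 : (B 1).coeff (2*i) = 0 := by
      rw [show B 1 = 1 from rfl, Polynomial.coeff_one, if_neg (by omega)]
    rw [h1, h2]
    simp

lemma A_coeff0 (a : ℕ) : (A (a+1)).coeff 0 = 0 := by
  induction a with
  | zero => rw [show A 1 = 0 from rfl, Polynomial.coeff_zero]
  | succ a ih =>
      rw [show A (a+2) = Polynomial.C (b (a+1)) * A (a+1) - Polynomial.X^2 * A a from rfl]
      rw [Polynomial.coeff_sub, Polynomial.coeff_C_mul, ih, Polynomial.mul_coeff_zero,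
        Polynomial.coeff_X_pow, if_neg (by omega)]
      ring
lemma SSrec (a k' : ℕ) :
    SS (a+2) (k'+1) = b (a+1) * SS (a+1) (k'+1) + SS a k'
      - q^(k'^2)/qfact (2*k') * (A a).coeff 0 := by
  have hA : A (a+2) = Polynomial.C (b (a+1)) * A (a+1) - Polynomial.X^2 * A a := rfl
  have hB : B (a+2) = Polynomial.C (b (a+1)) * B (a+1) - Polynomial.X^2 * B a := rfl
  have key : ∀ i ∈ Finset.range (k'+1),
      (-1 : K) ^ i * q ^ ((k'+1 - i - 1) ^ 2) / qfact (2 * (k'+1) - 2 * i - 2) *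
        ((A (a+2)).coeff (2*i+2) + (B (a+2)).coeff (2*i) / qint (2 * ((k'+1 : ℕ) : ℤ) - 2 * (i : ℤ) - 1))
      = b (a+1) * ((-1 : K) ^ i * q ^ ((k'+1 - i - 1) ^ 2) / qfact (2 * (k'+1) - 2 * i - 2) *
          ((A (a+1)).coeff (2*i+2) + (B (a+1)).coeff (2*i) / qint (2 * ((k'+1 : ℕ) : ℤ) - 2 * (i : ℤ) - 1)))
        - (-1 : K) ^ i * q ^ ((k'+1 - i - 1) ^ 2) / qfact (2 * (k'+1) - 2 * i - 2) *
          ((Polynomial.X^2 * A a).coeff (2*i+2) + (Polynomial.X^2 * B a).coeff (2*i) / qint (2 * ((k'+1 : ℕ) : ℤ) - 2 * (i : ℤ) - 1)) := by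
    intro i _
    rw [hA, hB, Polynomial.coeff_sub, Polynomial.coeff_sub, Polynomial.coeff_C_mul,
      Polynomial.coeff_C_mul]
    ring
  rw [SS, Finset.sum_congr rfl key, Finset.sum_sub_distrib, ← Finset.mul_sum, ← SS,
    Finset.sum_range_succ']
  have h0 : (-1 : K) ^ 0 * q ^ ((k'+1 - 0 - 1) ^ 2) / qfact (2 * (k'+1) - 2 * 0 - 2) *
      ((Polynomial.X^2 * A a).coeff (2*0+2) + (Polynomial.X^2 * B a).coeff (2*0) / qint (2 * ((k'+1 : ℕ) : ℤ) - 2 * ((0:ℕ) : ℤ) - 1))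
      = q^(k'^2)/qfact (2*k') * (A a).coeff 0 := by
    have c2 : (Polynomial.X^2 * A a).coeff (2*0+2) = (A a).coeff 0 := by
      simpa using Polynomial.coeff_X_pow_mul (A a) 2 0
    have c0 : (Polynomial.X^2 * B a).coeff (2*0) = 0 := by
      rw [show 2*0 = 0 by omega, Polynomial.mul_coeff_zero, Polynomial.coeff_X_pow,
        if_neg (by omega)]
      ring
    rw [c2, c0, show k'+1-0-1 = k' by omega, show 2*(k'+1)-2*0-2 = 2*k' by omega]
    simp
  have hshift : ∀ i ∈ Finset.range k',
      (-1 : K) ^ (i+1) * q ^ ((k'+1 - (i+1) - 1) ^ 2) / qfact (2 * (k'+1) - 2 * (i+1) - 2) *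
        ((Polynomial.X^2 * A a).coeff (2*(i+1)+2) + (Polynomial.X^2 * B a).coeff (2*(i+1)) / qint (2 * ((k'+1 : ℕ) : ℤ) - 2 * (((i+1) : ℕ) : ℤ) - 1))
      = -((-1 : K) ^ i * q ^ ((k' - i - 1) ^ 2) / qfact (2 * k' - 2 * i - 2) *
          ((A a).coeff (2*i+2) + (B a).coeff (2*i) / qint (2 * ((k' : ℕ) : ℤ) - 2 * (i : ℤ) - 1))) := by
    intro i _
    have cA : (Polynomial.X^2 * A a).coeff (2*(i+1)+2) = (A a).coeff (2*i+2) := by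
      rw [show 2*(i+1)+2 = (2*i+2)+2 by ring]
      exact Polynomial.coeff_X_pow_mul (A a) 2 (2*i+2)
    have cB : (Polynomial.X^2 * B a).coeff (2*(i+1)) = (B a).coeff (2*i) := by
      rw [show 2*(i+1) = (2*i)+2 by ring]
      exact Polynomial.coeff_X_pow_mul (B a) 2 (2*i)
    have hr : (2 * ((k'+1 : ℕ) : ℤ) - 2 * (((i+1) : ℕ) : ℤ) - 1) = (2 * ((k' : ℕ) : ℤ) - 2 * (i : ℤ) - 1) := by
      push_cast; ring
    rw [cA, cB, hr, show k'+1-(i+1)-1 = k'-i-1 by omega, show 2*(k'+1)-2*(i+1)-2 = 2*k'-2*i-2 by omega,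
      pow_succ]
    ring
  rw [Finset.sum_congr rfl hshift, h0, Finset.sum_neg_distrib, ← SS]
  ring
lemma SS_eq_TT (a : ℕ) : ∀ k, SS a k = TT a k := by
  induction a using Nat.strong_induction_on with
  | _ a ih =>
    rcases a with _ | _ | a'
    · intro k
      rw [SS_a_zero, TT_eq_zero (Or.inl rfl)]
    · intro k
      rcases k with _ | k'
      · rw [SS_k_zero, TT_eq_zero (Or.inr (by omega))]
      · rw [SS_one, TT_eq (by omega) (by omega), show (1:ℕ)-1 = 0 by omega,
          show k'+1-1 = k' by omega, tC, show (0:ℕ) = 2*0 from rfl, ee_even, PP_zero, mul_one,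
          show 0+k' = k' by omega]
        rw [← mul_div_assoc, ← mul_assoc, ← pow_add]
        have hp : ((-1:K))^(k'+k') = 1 := by rw [← two_mul, pow_mul, neg_one_sq, one_pow]
        rw [hp, one_mul]
    · intro k
      rcases k with _ | k'
      · rw [SS_k_zero, TT_eq_zero (Or.inr (by omega))]
      · have h1 := ih (a'+1) (by omega) (k'+1)
        have h0 := ih a' (by omega) k'
        rw [SSrec, h1, h0]
        rcases a' with _ | a''
        · rw [show (A 0).coeff 0 = 1 by rw [show A 0 = 1 from rfl]; simp, TTrec0]
          ring
        · rw [A_coeff0 a'', TTrec]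
          ring

/-- For all `n ≥ 1` and `0 ≤ k ≤ n`:
`∑_{i=0}^{k-1} (-1)^i q^((k-i-1)²)/[2k-2i-2]_q! · (c_{n,i+1} + d_{n,i}/[2k-2i-1]_q) = 0`. -/
theorem coefficient_identity (n k : ℕ) (hn : 1 ≤ n) (hk : k ≤ n) :
    ∑ i ∈ Finset.range k,
      (-1 : K) ^ i * q ^ ((k - i - 1) ^ 2) / qfact (2 * k - 2 * i - 2) *
        (c (n : ℤ) ((i : ℤ) + 1) + d (n : ℤ) (i : ℤ) / qint (2 * (k : ℤ) - 2 * (i : ℤ) - 1))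
      = 0 := by
  have hc : ∀ i : ℕ, c (n:ℤ) ((i:ℤ)+1) = (A (n+1)).coeff (2*i+2) := by
    intro i
    rw [c, if_neg (by omega)]
    congr 2 <;> omega
  have hd : ∀ i : ℕ, d (n:ℤ) (i:ℤ) = (B (n+1)).coeff (2*i) := by
    intro i
    rw [d, if_neg (by omega)]
    congr 2 <;> omega
  have hSS : (∑ i ∈ Finset.range k,
      (-1 : K) ^ i * q ^ ((k - i - 1) ^ 2) / qfact (2 * k - 2 * i - 2) *
        (c (n : ℤ) ((i : ℤ) + 1) + d (n : ℤ) (i : ℤ) / qint (2 * (k : ℤ) - 2 * (i : ℤ) - 1)))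
      = SS (n+1) k := Finset.sum_congr rfl (fun i _ => by rw [hc, hd])
  rw [hSS, SS_eq_TT, TT_eq_zero (Or.inr (by omega))]
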